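/- arXiv:2003.06702 — 4 statements merged into one kernel-verified Lean document; each statement's English description precedes it below -/
import Mathlib

section
/- Let ε > 0 and define φ : ℝ → ℝ by φ(t) = 3π/2 for t ≤ 1 and φ(t) = 3π/2 + ε·ln(ln(e + (t−1)⁴)) for t > 1. Then for every t > 1 one has 0 < φ'(t)·t·ln t ≤ 8ε. -/
/-!
With `s = t - 1`, `A = e + s⁴` and `L = log A ≥ 1`, one has `φ'(t) = ε · 4s³ / (A L)`, so the claim
reduces to `4 s³ t log t ≤ 8 A L`. Both factors are controlled by `sᵏ ≤ 1 + s⁴` (`k ≤ 4`):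
`t = 1 + s ≤ A` gives `log t ≤ L`, and `s³ t = s³ + s⁴ ≤ 1 + 2s⁴ ≤ 2A`.
-/

open Real

lemma pow_le_one_add_pow {R : Type*} [Semiring R] [LinearOrder R] [IsStrictOrderedRing R]
    {x : R} (hx : 0 ≤ x) {m n : ℕ} (hmn : m ≤ n) : x ^ m ≤ 1 + x ^ n := by
  rcases le_total x 1 with hx1 | hx1
  · exact (pow_le_one₀ hx hx1).trans (le_add_of_nonneg_right (pow_nonneg hx n))
  · exact (pow_le_pow_right₀ hx1 hmn).trans (le_add_of_nonneg_left zero_le_one)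

lemma one_le_log_exp_one_add {y : ℝ} (hy : 0 ≤ y) : 1 ≤ log (exp 1 + y) := by
  simpa only [log_exp] using log_le_log (exp_pos 1) (le_add_of_nonneg_right hy)

lemma hasDerivAt_log_log_exp_one_add_pow_four (s : ℝ) :
    HasDerivAt (fun x => log (log (exp 1 + x ^ 4)))
      (4 * s ^ 3 / (exp 1 + s ^ 4) / log (exp 1 + s ^ 4)) s := by
  have hA : exp 1 + s ^ 4 ≠ 0 := by positivity
  have hL : log (exp 1 + s ^ 4) ≠ 0 :=
    (zero_lt_one.trans_le (one_le_log_exp_one_add (by positivity))).ne'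
  simpa using ((hasDerivAt_pow 4 s).const_add (exp 1)).log hA |>.log hL

lemma pow_three_div_mul_log_le {s : ℝ} (hs : 0 ≤ s) :
    4 * s ^ 3 / (exp 1 + s ^ 4) / log (exp 1 + s ^ 4) * (1 + s) * log (1 + s) ≤ 8 := by
  have he : 2 ≤ exp 1 := by linarith [add_one_le_exp (1 : ℝ)]
  have hA : 0 < exp 1 + s ^ 4 := by positivity
  have hL : 1 ≤ log (exp 1 + s ^ 4) := one_le_log_exp_one_add (by positivity)
  have hlog_t : 0 ≤ log (1 + s) := log_nonneg (by linarith)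
  have ht_le : 1 + s ≤ exp 1 + s ^ 4 := by
    linarith [pow_le_one_add_pow hs (show 1 ≤ 4 by norm_num), pow_one s]
  have hlog_le : log (1 + s) ≤ log (exp 1 + s ^ 4) := log_le_log (by linarith) ht_le
  have hpoly : s ^ 3 * (1 + s) ≤ 2 * (exp 1 + s ^ 4) := by
    linarith [pow_le_one_add_pow hs (show 3 ≤ 4 by norm_num), pow_succ s 3]
  rw [div_div, div_mul_eq_mul_div, div_mul_eq_mul_div, div_le_iff₀ (by positivity)]
  calc 4 * s ^ 3 * (1 + s) * log (1 + s)
      ≤ 4 * (2 * (exp 1 + s ^ 4)) * log (exp 1 + s ^ 4) := by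
        rw [mul_assoc 4]
        gcongr
    _ = 8 * ((exp 1 + s ^ 4) * log (exp 1 + s ^ 4)) := by ring

theorem phi_deriv_t_log_t_estimate (ε : ℝ) (hε : 0 < ε) (φ : ℝ → ℝ)
    (hφ : ∀ t : ℝ, φ t = if t ≤ 1 then 3 * π / 2
      else 3 * π / 2 + ε * Real.log (Real.log (Real.exp 1 + (t - 1) ^ 4))) :
    ∀ t : ℝ, 1 < t →
      0 < deriv φ t * t * Real.log t ∧ deriv φ t * t * Real.log t ≤ 8 * ε := by
  intro t ht
  have hφ' : HasDerivAt φ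
      (ε * (4 * (t - 1) ^ 3 / (exp 1 + (t - 1) ^ 4) / log (exp 1 + (t - 1) ^ 4))) t := by
    refine ((((hasDerivAt_log_log_exp_one_add_pow_four (t - 1)).comp_sub_const t 1).const_mul ε
      ).const_add (3 * π / 2)).congr_of_eventuallyEq ?_
    filter_upwards [eventually_gt_nhds ht] with x hx
    rw [hφ x, if_neg hx.not_ge]
  obtain ⟨s, hs, rfl⟩ : ∃ s, 0 < s ∧ t = 1 + s := ⟨t - 1, by linarith, by ring⟩
  rw [hφ'.deriv, add_sub_cancel_left]
  have hL : 1 ≤ log (exp 1 + s ^ 4) := one_le_log_exp_one_add (by positivity)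
  have hlog_t : 0 < log (1 + s) := log_pos (by linarith)
  constructor
  · have : 0 < 4 * s ^ 3 / (exp 1 + s ^ 4) / log (exp 1 + s ^ 4) := by
      have := zero_lt_one.trans_le hL
      positivity
    positivity
  · simpa only [mul_assoc, mul_comm 8 ε] using
      mul_le_mul_of_nonneg_left (pow_three_div_mul_log_le hs.le) hε.le
end

section
/- Let ε > 0 and define φ : ℝ → ℝ by φ(t) = 3π/2 for t ≤ 1 and φ(t) = 3π/2 + ε·ln(ln(e + (t−1)⁴)) for t > 1. Then for every t > 1 one has |φ''(t)|·t²·ln t ≤ 128ε. -/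
/-!
On `(1, ∞)` we have `φ = 3π/2 + ε log L` with `Q = e + (t - 1)⁴` and `L = log Q ≥ 1`, so that
`φ'' = ε N / (Q² L²)` with `N = 12 (t-1)² Q L - 16 (t-1)⁶ L - 16 (t-1)⁶`.
As `(t - 1)⁴ ≤ Q` we get `|N| ≤ 44 (t-1)² Q L`, and as `log t ≤ L` the left-hand side is at most
`4ε · 11 (t-1)² t² / Q`; finally `11 (t-1)² t² ≤ 32 Q` is an elementary polynomial inequality.
-/

open Real Topology

noncomputable def shiftedQuartic (t : ℝ) : ℝ := exp 1 + (t - 1) ^ 4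

lemma shiftedQuartic_pos (t : ℝ) : 0 < shiftedQuartic t := by
  unfold shiftedQuartic; positivity

lemma pow_four_le_shiftedQuartic (t : ℝ) : (t - 1) ^ 4 ≤ shiftedQuartic t :=
  le_add_of_nonneg_left (exp_pos 1).le

lemma one_le_log_shiftedQuartic (t : ℝ) : 1 ≤ log (shiftedQuartic t) := by
  rw [← log_exp 1]
  exact log_le_log (exp_pos 1) (le_add_of_nonneg_right (by positivity))

lemma log_le_log_shiftedQuartic {t : ℝ} (ht : 0 < t) : log t ≤ log (shiftedQuartic t) := by
  refine log_le_log ht ?_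
  have := exp_one_gt_d9
  unfold shiftedQuartic
  nlinarith [sq_nonneg ((t - 1) ^ 2 - 1 / 2), sq_nonneg (t - 3 / 2)]

lemma sq_mul_sq_le_shiftedQuartic (t : ℝ) : 11 * (t - 1) ^ 2 * t ^ 2 ≤ 32 * shiftedQuartic t := by
  have := exp_one_gt_d9
  unfold shiftedQuartic
  nlinarith [sq_nonneg ((t - 1) ^ 2 - 1), sq_nonneg (t - 2), sq_nonneg ((t - 1) ^ 2 - (t - 1))]

lemma hasDerivAt_shiftedQuartic (t : ℝ) :
    HasDerivAt shiftedQuartic (4 * (t - 1) ^ 3) t :=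
  ((((hasDerivAt_id t).sub_const 1).pow 4).const_add (exp 1)).congr_deriv (by norm_num)

lemma log_shiftedQuartic_ne_zero (t : ℝ) : log (shiftedQuartic t) ≠ 0 :=
  (one_pos.trans_le (one_le_log_shiftedQuartic t)).ne'

lemma hasDerivAt_log_log_shiftedQuartic (t : ℝ) :
    HasDerivAt (fun y => log (log (shiftedQuartic y)))
      (4 * (t - 1) ^ 3 / (shiftedQuartic t * log (shiftedQuartic t))) t := by
  have h := ((hasDerivAt_shiftedQuartic t).log (shiftedQuartic_pos t).ne').log
    (log_shiftedQuartic_ne_zero t)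
  convert h using 1
  rw [div_div]

lemma hasDerivAt_deriv_log_log_shiftedQuartic (t : ℝ) :
    HasDerivAt (fun y => 4 * (y - 1) ^ 3 / (shiftedQuartic y * log (shiftedQuartic y)))
      ((12 * (t - 1) ^ 2 * shiftedQuartic t * log (shiftedQuartic t)
          - 16 * (t - 1) ^ 6 * log (shiftedQuartic t) - 16 * (t - 1) ^ 6) /
        (shiftedQuartic t ^ 2 * log (shiftedQuartic t) ^ 2)) t := by
  have hQ := hasDerivAt_shiftedQuartic t
  have hnum : HasDerivAt (fun y => 4 * (y - 1) ^ 3) (12 * (t - 1) ^ 2) t :=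
    ((((hasDerivAt_id t).sub_const 1).pow 3).const_mul 4).congr_deriv (by norm_num; ring)
  have hden := hQ.mul (hQ.log (shiftedQuartic_pos t).ne')
  refine (hnum.div hden (mul_ne_zero (shiftedQuartic_pos t).ne'
    (log_shiftedQuartic_ne_zero t))).congr_deriv ?_
  have := (shiftedQuartic_pos t).ne'
  simp only [Pi.mul_apply]
  field_simp
  ring

lemma deriv_deriv_const_add_mul_log_log_shiftedQuartic (c ε t : ℝ) :
    deriv (deriv fun y => c + ε * log (log (shiftedQuartic y))) t =
      ε * ((12 * (t - 1) ^ 2 * shiftedQuartic t * log (shiftedQuartic t)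
          - 16 * (t - 1) ^ 6 * log (shiftedQuartic t) - 16 * (t - 1) ^ 6) /
        (shiftedQuartic t ^ 2 * log (shiftedQuartic t) ^ 2)) := by
  have hderiv : (deriv fun y => c + ε * log (log (shiftedQuartic y))) =
      fun y => ε * (4 * (y - 1) ^ 3 / (shiftedQuartic y * log (shiftedQuartic y))) :=
    funext fun y => (((hasDerivAt_log_log_shiftedQuartic y).const_mul ε).const_add c).deriv
  rw [hderiv]
  exact ((hasDerivAt_deriv_log_log_shiftedQuartic t).const_mul ε).deriv

lemma abs_sub_sub_le_of_pow_four_le {u A L : ℝ} (hA : u ^ 4 ≤ A) (hL : 1 ≤ L) :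
    |12 * u ^ 2 * A * L - 16 * u ^ 6 * L - 16 * u ^ 6| ≤ 44 * u ^ 2 * A * L := by
  have hu6 : u ^ 6 ≤ u ^ 2 * A := by
    calc u ^ 6 = u ^ 2 * u ^ 4 := by ring
      _ ≤ u ^ 2 * A := by gcongr
  have h1 : 0 ≤ u ^ 6 := by positivity
  have h2 : 0 ≤ u ^ 2 * A * L := by
    have : 0 ≤ A := (by positivity : (0:ℝ) ≤ u ^ 4).trans hA
    positivity
  rw [abs_le]
  constructor <;> nlinarith [mul_le_mul_of_nonneg_right hu6 (zero_le_one.trans hL)]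

theorem phi_second_deriv_estimate (ε : ℝ) (hε : 0 < ε) (φ : ℝ → ℝ)
    (hφ : ∀ t : ℝ, φ t = if t ≤ 1 then 3 * π / 2
      else 3 * π / 2 + ε * Real.log (Real.log (Real.exp 1 + (t - 1) ^ 4))) :
    ∀ t : ℝ, 1 < t →
      |deriv (deriv φ) t| * t ^ 2 * Real.log t ≤ 128 * ε := by
  intro t ht
  have hφt : φ =ᶠ[𝓝 t] fun y => 3 * π / 2 + ε * log (log (shiftedQuartic y)) := by
    filter_upwards [Ioi_mem_nhds ht] with y hy
    rw [hφ y, if_neg (not_le.mpr hy), shiftedQuartic]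
  rw [hφt.deriv.deriv_eq, deriv_deriv_const_add_mul_log_log_shiftedQuartic]
  set A := shiftedQuartic t
  set L := log A
  have hA : 0 < A := shiftedQuartic_pos t
  have hL : 1 ≤ L := one_le_log_shiftedQuartic t
  have hlog : log t ≤ L := log_le_log_shiftedQuartic (by linarith)
  rw [abs_mul, abs_of_pos hε, abs_div, abs_of_pos (by positivity : 0 < A ^ 2 * L ^ 2)]
  calc ε * (|12 * (t - 1) ^ 2 * A * L - 16 * (t - 1) ^ 6 * L - 16 * (t - 1) ^ 6|
          / (A ^ 2 * L ^ 2)) * t ^ 2 * log t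
      ≤ ε * (44 * (t - 1) ^ 2 * A * L / (A ^ 2 * L ^ 2)) * t ^ 2 * L := by
        gcongr
        · exact log_nonneg ht.le
        · exact abs_sub_sub_le_of_pow_four_le (pow_four_le_shiftedQuartic t) hL
    _ = 4 * ε * (11 * (t - 1) ^ 2 * t ^ 2) / A := by
        field_simp
        ring
    _ ≤ 4 * ε * (32 * A) / A := by gcongr 4 * ε * ?_ / _; exact sq_mul_sq_le_shiftedQuartic t
    _ = 128 * ε := by field_simp; ring
end

section
/- Let a, b > 0 with a − b > 1, let 0 < ε < min{1, (a−1−b)/(224b)}, let φ(t) = 3π/2 for t ≤ 1 and φ(t) = 3π/2 + ε·ln(ln(e + (t−1)⁴)) for t > 1, and let g : [0,∞) → [0,∞) be defined by g(t) = t^(a + b·sin(φ(t))) for t > 0 and g(0) = 0. Then g(0) = 0, g(t) > 0 for t > 0, g(t)/t → 0 as t → 0⁺, g is differentiable on [0,∞) with g'(0) = 0, g is twice continuously differentiable on (0,∞), and g' is continuous on [0,∞). -/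
/-!
On `(0, 1]` the phase is `3π/2`, so `g t = t ^ (a - b)` there; since `a - b > 1` this power is
`C¹` on `[0, ∞)` with derivative `0` at the origin, which settles every claim at `0`.
Writing `max (t - 1) 0 ^ 4` for `(t - 1) ^ 4` removes the case split in `φ`: the two agree for
`t > 1`, and for `t ≤ 1` the new formula gives `log (log e) = 0`. As `max s 0 ^ 4` is `C³`, the
phase is `C³` on all of `ℝ`, and `g t = t ^ (a + b sin φ t)` is `C²` on `(0, ∞)`.
-/

open Real Set Filter Topology

theorem hasDerivAt_max_zero_pow (n : ℕ) (x : ℝ) :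
    HasDerivAt (fun y : ℝ => max y 0 ^ (n + 2)) ((n + 2) * max x 0 ^ (n + 1)) x := by
  have hIic : HasDerivWithinAt (fun y : ℝ => max y 0 ^ (n + 2))
      ((n + 2) * max x 0 ^ (n + 1)) (Iic 0) x := by
    rcases le_or_gt x 0 with hx | hx
    · rw [max_eq_right hx]
      simpa using (hasDerivWithinAt_const x (Iic 0) (0 : ℝ)).congr_of_mem
        (fun y hy => by simp [max_eq_right (mem_Iic.mp hy)]) hx
    · exact HasFDerivWithinAt.of_notMem_closure (by simpa using hx)
  have hIci : HasDerivWithinAt (fun y : ℝ => max y 0 ^ (n + 2))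
      ((n + 2) * max x 0 ^ (n + 1)) (Ici 0) x := by
    rcases le_or_gt 0 x with hx | hx
    · rw [max_eq_left hx]
      simpa using ((hasDerivAt_pow (n + 2) x).hasDerivWithinAt (s := Ici 0)).congr_of_mem
        (fun y hy => by simp [max_eq_left (mem_Ici.mp hy)]) (mem_Ici.mpr hx)
    · exact HasFDerivWithinAt.of_notMem_closure (by simpa using hx)
  simpa using hIic.union hIci

theorem contDiff_max_zero_pow (n : ℕ) : ContDiff ℝ n (fun x : ℝ => max x 0 ^ (n + 1)) := by
  induction n with
  | zero => exact contDiff_zero.mpr (by fun_prop)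
  | succ n ih =>
    have hderiv : deriv (fun x : ℝ => max x 0 ^ (n + 2)) =
        fun x : ℝ => (n + 2) * max x 0 ^ (n + 1) :=
      funext fun x => (hasDerivAt_max_zero_pow n x).deriv
    push_cast
    rw [contDiff_succ_iff_deriv, hderiv]
    exact ⟨fun x => (hasDerivAt_max_zero_pow n x).differentiableAt, by simp,
      contDiff_const.mul ih⟩

theorem sin_three_pi_div_two : sin (3 * π / 2) = -1 := by
  rw [show 3 * π / 2 = π + π / 2 by ring, sin_add_pi_div_two, cos_pi]

noncomputable def phase (ε t : ℝ) : ℝ :=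
  3 * π / 2 + ε * log (log (exp 1 + max (t - 1) 0 ^ 4))

theorem phase_of_le_one {ε t : ℝ} (ht : t ≤ 1) : phase ε t = 3 * π / 2 := by
  simp [phase, max_eq_right (sub_nonpos.mpr ht)]

theorem phase_eq_ite (ε t : ℝ) : phase ε t = if t ≤ 1 then 3 * π / 2
    else 3 * π / 2 + ε * log (log (exp 1 + (t - 1) ^ 4)) := by
  split_ifs with ht
  · exact phase_of_le_one ht
  · simp [phase, max_eq_left (sub_nonneg.mpr (not_le.mp ht).le)]

theorem contDiff_phase (ε : ℝ) : ContDiff ℝ 3 (phase ε) := by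
  have hbump : ContDiff ℝ 3 fun t : ℝ => max (t - 1) 0 ^ 4 :=
    (contDiff_max_zero_pow 3).comp (contDiff_id.sub contDiff_const)
  have hlog_ge_one (t : ℝ) : 1 ≤ log (exp 1 + max (t - 1) 0 ^ 4) := by
    calc (1 : ℝ) = log (exp 1) := (log_exp 1).symm
      _ ≤ _ := log_le_log (exp_pos 1) (le_add_of_nonneg_right (by positivity))
  exact contDiff_const.add <| contDiff_const.mul <|
    ((contDiff_const.add hbump).log fun t => by positivity).log
      fun t => (zero_lt_one.trans_le (hlog_ge_one t)).ne'

theorem hasDerivWithinAt_Ici_zero_of_eventuallyEq_rpow {g : ℝ → ℝ} {c : ℝ} (hc : 1 < c)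
    (hg : g =ᶠ[𝓝[≥] 0] fun t => t ^ c) : HasDerivWithinAt g 0 (Ici 0) 0 := by
  have h := hasDerivAt_rpow_const (x := 0) (p := c) (Or.inr hc.le)
  rw [zero_rpow (by linarith), mul_zero] at h
  exact h.hasDerivWithinAt.congr_of_eventuallyEq hg (hg.eq_of_nhdsWithin self_mem_Ici)

theorem contDiffWithinAt_Ici_zero_of_eventuallyEq_rpow {g : ℝ → ℝ} {c : ℝ} (hc : 1 ≤ c)
    (hg : g =ᶠ[𝓝[≥] 0] fun t => t ^ c) : ContDiffWithinAt ℝ 1 g (Ici 0) 0 :=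
  (contDiff_rpow_const_of_le (n := 1) (by exact_mod_cast hc)).contDiffWithinAt
    |>.congr_of_eventuallyEq hg (hg.eq_of_nhdsWithin self_mem_Ici)

theorem tendsto_div_self_of_hasDerivWithinAt_Ici_zero {g : ℝ → ℝ} {g' : ℝ}
    (hd : HasDerivWithinAt g g' (Ici 0) 0) (hg0 : g 0 = 0) :
    Tendsto (fun t => g t / t) (𝓝[>] 0) (𝓝 g') := by
  have h := (hasDerivWithinAt_iff_tendsto_slope' self_notMem_Ioi).mp (hd.mono Ioi_subset_Ici_self)
  simpa [slope_fun_def_field, hg0] using h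

theorem g_basic_regularity_general (a b ε : ℝ)
    (hab : 1 < a - b)
    (φ : ℝ → ℝ)
    (hφ : ∀ t : ℝ, φ t = if t ≤ 1 then 3 * π / 2
      else 3 * π / 2 + ε * Real.log (Real.log (Real.exp 1 + (t - 1) ^ 4)))
    (g : ℝ → ℝ) (hg0 : g 0 = 0)
    (hg : ∀ t : ℝ, 0 < t → g t = t ^ (a + b * Real.sin (φ t))) :
    g 0 = 0 ∧
    (∀ t : ℝ, 0 < t → 0 < g t) ∧
    Filter.Tendsto (fun t => g t / t) (nhdsWithin 0 (Set.Ioi 0)) (nhds 0) ∧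
    DifferentiableOn ℝ g (Set.Ici 0) ∧
    HasDerivWithinAt g 0 (Set.Ici 0) 0 ∧
    ContDiffOn ℝ 2 g (Set.Ioi 0) ∧
    ContinuousOn (derivWithin g (Set.Ici 0)) (Set.Ici 0) := by
  have hg_phase (t : ℝ) (ht : 0 < t) : g t = t ^ (a + b * sin (phase ε t)) := by
    rw [hg t ht, hφ, phase_eq_ite]
  have hg_near_zero : g =ᶠ[𝓝[≥] 0] fun t => t ^ (a - b) := by
    filter_upwards [self_mem_nhdsWithin, nhdsWithin_le_nhds (Iio_mem_nhds one_pos)]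
      with t (ht : 0 ≤ t) (ht1 : t < 1)
    rcases ht.eq_or_lt with rfl | ht
    · rw [hg0, zero_rpow (by linarith)]
    · rw [hg_phase t ht, phase_of_le_one ht1.le, sin_three_pi_div_two, mul_neg_one, sub_eq_add_neg]
  have hC2 : ContDiffOn ℝ 2 g (Ioi 0) := by
    have hexp : ContDiff ℝ 2 fun t => a + b * sin (phase ε t) :=
      contDiff_const.add <| contDiff_const.mul <|
        contDiff_sin.comp ((contDiff_phase ε).of_le (by norm_num))
    refine ContDiffOn.congr (fun t ht => ?_) hg_phase
    exact (contDiffAt_id.rpow hexp.contDiffAt (ne_of_gt ht)).contDiffWithinAt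
  have hC1 : ContDiffOn ℝ 1 g (Ici 0) := by
    intro t ht
    rcases (mem_Ici.mp ht).eq_or_lt with rfl | ht
    · exact contDiffWithinAt_Ici_zero_of_eventuallyEq_rpow (by linarith) hg_near_zero
    · exact ((hC2.contDiffAt (Ioi_mem_nhds ht)).of_le one_le_two).contDiffWithinAt
  have hd0 := hasDerivWithinAt_Ici_zero_of_eventuallyEq_rpow (by linarith) hg_near_zero
  exact ⟨hg0, fun t ht => hg_phase t ht ▸ rpow_pos_of_pos ht _,
    tendsto_div_self_of_hasDerivWithinAt_Ici_zero hd0 hg0, hC1.differentiableOn one_ne_zero, hd0,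
    hC2, hC1.continuousOn_derivWithin (uniqueDiffOn_Ici 0) le_rfl⟩

theorem g_basic_regularity (a b ε : ℝ) (ha : 0 < a) (hb : 0 < b)
    (hab : 1 < a - b) (hε : 0 < ε) (hε' : ε < min 1 ((a - 1 - b) / (224 * b)))
    (φ : ℝ → ℝ)
    (hφ : ∀ t : ℝ, φ t = if t ≤ 1 then 3 * π / 2
      else 3 * π / 2 + ε * Real.log (Real.log (Real.exp 1 + (t - 1) ^ 4)))
    (g : ℝ → ℝ) (hg0 : g 0 = 0)
    (hg : ∀ t : ℝ, 0 < t → g t = t ^ (a + b * Real.sin (φ t))) :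
    g 0 = 0 ∧
    (∀ t : ℝ, 0 < t → 0 < g t) ∧
    Filter.Tendsto (fun t => g t / t) (nhdsWithin 0 (Set.Ioi 0)) (nhds 0) ∧
    DifferentiableOn ℝ g (Set.Ici 0) ∧
    HasDerivWithinAt g 0 (Set.Ici 0) 0 ∧
    ContDiffOn ℝ 2 g (Set.Ioi 0) ∧
    ContinuousOn (derivWithin g (Set.Ici 0)) (Set.Ici 0) :=
  g_basic_regularity_general a b ε hab φ hφ g hg0 hg
end

section
/- Let a, b > 0 with a − b > 1, let 0 < ε < min{1, (a−1−b)/(224b)}, let φ(t) = 3π/2 for t ≤ 1 and φ(t) = 3π/2 + ε·ln(ln(e + (t−1)⁴)) for t > 1, and let g(t) = t^(a + b·sin(φ(t))) for t > 0, g(0) = 0. Then for every t > 0: 0 < (a − 1 − b − 224bε)·g'(t)/t ≤ g''(t) ≤ (a − 1 + b + 224bε)·g'(t)/t. In particular g''(t) > 0 for every t > 0. -/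
/-!
Write `g t = t ^ H t` for `t > 0`. The elasticity `X = t g' / g = t H' log t + H` satisfies
`t² g'' = g (X (X - 1) + t X')`, i.e. `g'' = (X - 1 + t X' / X) g' / t`, so it suffices to show
`|X - a| ≤ b + O(b ε)` and `|t X'| = O(b ε)`. Here `H = a - b cos (ε ψ₊)`, where `ψ₊` is
`ψ = log log (e + (t - 1)⁴)` cut off to `t > 1`; it is `C²` because `ψ`, `ψ'`, `ψ''` vanish at `1`.
The double logarithm grows so slowly that `t ψ'`, `t ψ' log t` and `t² ψ'' log t` are bounded by
absolute constants (`3 log t ≤ 2 log (e + (t - 1)⁴)` absorbs the `log t` factors), and the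
resulting constants add up to `560 / 3 ≤ 224`.
-/

open Real Set Filter Topology

theorem hasDerivAt_indicator_Ioi {f f' : ℝ → ℝ} {c : ℝ}
    (hf : ∀ x, c ≤ x → HasDerivAt f (f' x) x) (hc : f c = 0) (hc' : f' c = 0) (x : ℝ) :
    HasDerivAt ((Ioi c).indicator f) ((Ioi c).indicator f' x) x := by
  have hzero : ∀ {y}, y ≤ c → ∀ k : ℝ → ℝ, (Ioi c).indicator k y = 0 :=
    fun hy k => indicator_of_notMem (notMem_Ioi.mpr hy) k
  rcases lt_trichotomy x c with hx | rfl | hx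
  · rw [hzero hx.le]
    refine (hasDerivAt_const x 0).congr_of_eventuallyEq ?_
    filter_upwards [Iio_mem_nhds hx] with y hy
    exact hzero (le_of_lt hy) f
  · have hleft : HasDerivWithinAt ((Ioi x).indicator f) 0 (Iic x) x :=
      (hasDerivWithinAt_const x _ 0).congr (fun y hy => hzero hy f) (hzero le_rfl f)
    have hright : HasDerivWithinAt ((Ioi x).indicator f) 0 (Ici x) x := by
      refine hc' ▸ (hf x le_rfl).hasDerivWithinAt.congr (fun y hy => ?_) (by rw [hzero le_rfl, hc])
      rcases (mem_Ici.mp hy).eq_or_lt with rfl | hy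
      · rw [hzero le_rfl, hc]
      · exact indicator_of_mem hy f
    rw [hzero le_rfl, ← hasDerivWithinAt_univ, ← Iic_union_Ici]
    exact hleft.union hright
  · rw [indicator_of_mem (mem_Ioi.mpr hx)]
    refine (hf x hx.le).congr_of_eventuallyEq ?_
    filter_upwards [Ioi_mem_nhds hx] with y hy
    exact indicator_of_mem (mem_Ioi.mpr hy) f

theorem sin_three_pi_div_two_add (x : ℝ) : sin (3 * π / 2 + x) = -cos x := by
  rw [show 3 * π / 2 + x = x + π / 2 + π by ring, sin_add_pi, sin_add_pi_div_two]

theorem abs_mul_le_of_abs_le_one {s y K : ℝ} (hs : |s| ≤ 1) (hy : |y| ≤ K) : |s * y| ≤ K := by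
  rw [abs_mul]
  nlinarith [abs_nonneg s, abs_nonneg y]

noncomputable def rpowElasticity (H H' : ℝ → ℝ) (t : ℝ) : ℝ := t * H' t * log t + H t

theorem hasDerivAt_rpow_exponent {H H' : ℝ → ℝ} {x : ℝ} (hH : HasDerivAt H (H' x) x)
    (hx : 0 < x) : HasDerivAt (fun y => y ^ H y) (x ^ H x * rpowElasticity H H' x / x) x := by
  convert (hasDerivAt_id x).rpow hH hx using 1
  · rfl
  rw [rpowElasticity, id_eq, rpow_sub_one hx.ne']
  field_simp
  ring

theorem hasDerivAt_of_eqOn_rpow {g H H' : ℝ → ℝ} {x : ℝ} (hg : ∀ y > 0, g y = y ^ H y)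
    (hH : HasDerivAt H (H' x) x) (hx : 0 < x) :
    HasDerivAt g (g x * rpowElasticity H H' x / x) x := by
  rw [hg x hx]
  refine (hasDerivAt_rpow_exponent hH hx).congr_of_eventuallyEq ?_
  filter_upwards [Ioi_mem_nhds hx] with y hy using hg y hy

theorem hasDerivAt_rpowElasticity {H H' : ℝ → ℝ} {H'' t : ℝ} (hH : HasDerivAt H (H' t) t)
    (hH' : HasDerivAt H' H'' t) (ht : t ≠ 0) :
    HasDerivAt (rpowElasticity H H') (H' t * log t + t * H'' * log t + 2 * H' t) t := by
  refine ((((hasDerivAt_id t).mul hH').mul (hasDerivAt_log ht)).add hH).congr_deriv ?_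
  simp only [Pi.mul_apply, id_eq]
  field_simp
  ring

theorem deriv_deriv_eq_of_elasticity {G X : ℝ → ℝ} {X' t : ℝ}
    (hG : ∀ᶠ x in 𝓝 t, HasDerivAt G (G x * X x / x) x) (hX : HasDerivAt X X' t)
    (ht : t ≠ 0) (hXt : X t ≠ 0) :
    deriv (deriv G) t = (X t - 1 + t * X' / X t) * (deriv G t / t) := by
  have hG' : deriv G =ᶠ[𝓝 t] fun x => G x * X x / x := hG.mono fun x hx => hx.deriv
  have h2 : HasDerivAt (fun x => G x * X x / x)
      (((G t * X t / t * X t + G t * X') * t - G t * X t * 1) / t ^ 2) t :=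
    (hG.self_of_nhds.mul hX).div (hasDerivAt_id t) ht
  rw [hG'.deriv_eq, h2.deriv, hG'.self_of_nhds]
  field_simp
  ring

theorem deriv_deriv_bounds_of_elasticity {G X : ℝ → ℝ} {X' t m M η : ℝ}
    (hG : ∀ᶠ x in 𝓝 t, HasDerivAt G (G x * X x / x) x) (hX : HasDerivAt X X' t)
    (ht : 0 < t) (hGt : 0 < G t) (h1 : 1 ≤ m) (hm : m ≤ X t) (hM : X t ≤ M)
    (hη : |t * X'| ≤ η) :
    0 < deriv G t / t ∧ (m - 1 - η) * (deriv G t / t) ≤ deriv (deriv G) t ∧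
      deriv (deriv G) t ≤ (M - 1 + η) * (deriv G t / t) := by
  have hX0 : 0 < X t := by linarith
  have hpos : 0 < deriv G t / t := by
    rw [hG.self_of_nhds.deriv]
    positivity
  have hquot : |t * X' / X t| ≤ η := by
    rw [abs_div, abs_of_pos hX0]
    exact (div_le_self (abs_nonneg _) (h1.trans hm)).trans hη
  rw [deriv_deriv_eq_of_elasticity hG hX ht.ne' hX0.ne']
  refine ⟨hpos, mul_le_mul_of_nonneg_right ?_ hpos.le, mul_le_mul_of_nonneg_right ?_ hpos.le⟩
  · linarith [neg_abs_le (t * X' / X t)]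
  · linarith [le_abs_self (t * X' / X t)]

namespace Phase

noncomputable def E (t : ℝ) : ℝ := exp 1 + (t - 1) ^ 4
noncomputable def L (t : ℝ) : ℝ := log (E t)
noncomputable def ψ (t : ℝ) : ℝ := log (L t)
noncomputable def dψ (t : ℝ) : ℝ := 4 * (t - 1) ^ 3 / (E t * L t)
noncomputable def d2ψ (t : ℝ) : ℝ :=
  12 * (t - 1) ^ 2 / (E t * L t) - 16 * (t - 1) ^ 6 / (E t ^ 2 * L t)
    - 16 * (t - 1) ^ 6 / (E t ^ 2 * L t ^ 2)

theorem exp_one_le_E (t : ℝ) : exp 1 ≤ E t := le_add_of_nonneg_right (by positivity)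

theorem E_pos (t : ℝ) : 0 < E t := (exp_pos 1).trans_le (exp_one_le_E t)

theorem one_le_L (t : ℝ) : 1 ≤ L t := by
  simpa [L] using log_le_log (exp_pos 1) (exp_one_le_E t)

theorem L_pos (t : ℝ) : 0 < L t := one_pos.trans_le (one_le_L t)

theorem hasDerivAt_E (t : ℝ) : HasDerivAt E (4 * (t - 1) ^ 3) t :=
  ((((hasDerivAt_id t).sub_const 1).pow 4).const_add (exp 1)).congr_deriv (by norm_num)

theorem hasDerivAt_L (t : ℝ) : HasDerivAt L (4 * (t - 1) ^ 3 / E t) t :=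
  (hasDerivAt_E t).log (E_pos t).ne'

theorem hasDerivAt_ψ (t : ℝ) : HasDerivAt ψ (dψ t) t :=
  ((hasDerivAt_L t).log (L_pos t).ne').congr_deriv (div_div _ _ _)

theorem hasDerivAt_dψ (t : ℝ) : HasDerivAt dψ (d2ψ t) t := by
  have hnum : HasDerivAt (fun x => 4 * (x - 1) ^ 3) (12 * (t - 1) ^ 2) t :=
    ((((hasDerivAt_id t).sub_const 1).pow 3).const_mul 4).congr_deriv (by norm_num; ring)
  refine (hnum.div ((hasDerivAt_E t).mul (hasDerivAt_L t))
    (mul_pos (E_pos t) (L_pos t)).ne').congr_deriv ?_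
  have := (E_pos t).ne'
  have := (L_pos t).ne'
  simp only [d2ψ, Pi.mul_apply]
  field_simp
  ring

theorem ψ_one : ψ 1 = 0 := by simp [ψ, L, E]

theorem dψ_one : dψ 1 = 0 := by simp [dψ]

theorem d2ψ_one : d2ψ 1 = 0 := by simp [d2ψ]

section Bounds

variable {t : ℝ}

theorem three_mul_log_le (ht : 1 < t) : 3 * log t ≤ 2 * L t := by
  have he := exp_one_gt_d9
  have hs : 0 < t - 1 := by linarith
  have hpoly : t ^ 3 ≤ E t ^ 2 := by
    rw [E]
    nlinarith [sq_nonneg ((t-1)^2-1), sq_nonneg ((t-1)-1), sq_nonneg ((t-1)^2-(t-1)),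
      sq_nonneg ((t-1)^4-1), sq_nonneg ((t-1)^3-1), sq_nonneg ((t-1)^2+(t-1)),
      sq_nonneg ((t-1)^4-(t-1)), pow_pos hs 4]
  have := log_le_log (by positivity) hpoly
  rw [log_pow, log_pow] at this
  push_cast at this
  exact this

theorem cube_mul_le (ht : 1 < t) : (t - 1) ^ 3 * t ≤ 2 * E t := by
  have he := exp_one_gt_d9
  rw [E]
  nlinarith [sq_nonneg ((t-1)^2-(t-1)), sq_nonneg ((t-1)-1), sq_nonneg (t-1)]

theorem sq_mul_sq_le (ht : 1 < t) : (t - 1) ^ 2 * t ^ 2 ≤ 4 * E t := by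
  have he := exp_one_gt_d9
  rw [E]
  nlinarith [sq_nonneg ((t-1)^2-(t-1)), sq_nonneg ((t-1)-1), sq_nonneg ((t-1)^2-1), sq_nonneg (t-1)]

theorem log_div_L_le (ht : 1 < t) : log t / L t ≤ 2 / 3 := by
  rw [div_le_iff₀ (L_pos t)]
  linarith [three_mul_log_le ht]

theorem dψ_nonneg (ht : 1 ≤ t) : 0 ≤ dψ t :=
  div_nonneg (mul_nonneg zero_le_four (pow_nonneg (sub_nonneg.mpr ht) 3))
    (mul_pos (E_pos t) (L_pos t)).le

theorem mul_dψ_le (ht : 1 < t) : t * dψ t ≤ 8 := by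
  rw [dψ, mul_div_assoc', div_le_iff₀ (mul_pos (E_pos t) (L_pos t))]
  nlinarith [cube_mul_le ht, E_pos t, one_le_L t]

theorem mul_dψ_mul_log_le (ht : 1 < t) : t * dψ t * log t ≤ 16 / 3 := by
  have hE := E_pos t
  have hu : (t - 1) ^ 3 * t / E t ≤ 2 := by rw [div_le_iff₀ hE]; linarith [cube_mul_le ht]
  have hr := log_div_L_le ht
  have hr0 : 0 ≤ log t / L t := div_nonneg (log_nonneg ht.le) (L_pos t).le
  have hu0 : 0 ≤ (t - 1) ^ 3 * t / E t := by
    have : 0 ≤ t - 1 := by linarith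
    positivity
  have : t * dψ t * log t = 4 * ((t - 1) ^ 3 * t / E t) * (log t / L t) := by
    have := (L_pos t).ne'
    rw [dψ]; field_simp
  rw [this]
  nlinarith [mul_le_mul hu hr hr0 zero_le_two]

theorem abs_sq_mul_d2ψ_mul_log_le (ht : 1 < t) : |t ^ 2 * d2ψ t * log t| ≤ 352 / 3 := by
  have hE := E_pos t
  have hL := L_pos t
  have hs : 0 ≤ t - 1 := by linarith
  set r := log t / L t with hr_def
  set u := (t - 1) ^ 3 * t / E t with hu_def
  set v := (t - 1) ^ 2 * t ^ 2 / E t with hv_def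
  set w := 1 / L t with hw_def
  have hr : r ≤ 2 / 3 := log_div_L_le ht
  have hr0 : 0 ≤ r := div_nonneg (log_nonneg ht.le) hL.le
  have hu : u ≤ 2 := by rw [hu_def, div_le_iff₀ hE]; linarith [cube_mul_le ht]
  have hu0 : 0 ≤ u := by positivity
  have hv : v ≤ 4 := by rw [hv_def, div_le_iff₀ hE]; linarith [sq_mul_sq_le ht]
  have hv0 : 0 ≤ v := by positivity
  have hw : w ≤ 1 := by rw [hw_def, div_le_one hL]; exact one_le_L t
  have hw0 : 0 ≤ w := by positivity
  have heq : t ^ 2 * d2ψ t * log t = r * (12 * v - 16 * u ^ 2 * (1 + w)) := by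
    rw [d2ψ, hr_def, hu_def, hv_def, hw_def]
    field_simp
    ring
  have hZ : |12 * v - 16 * u ^ 2 * (1 + w)| ≤ 176 := by
    rw [abs_le]; constructor <;> nlinarith [mul_le_mul hu hu hu0 zero_le_two]
  rw [heq, abs_mul, abs_of_nonneg hr0]
  nlinarith [mul_le_mul hr hZ (abs_nonneg _) (by norm_num : (0 : ℝ) ≤ 2 / 3)]

end Bounds

theorem abs_mul_indicator_dψ_le (t : ℝ) : |t * (Ioi 1).indicator dψ t| ≤ 8 := by
  rcases le_or_gt t 1 with ht | ht
  · simp [indicator_of_notMem (notMem_Ioi.mpr ht)]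
  · rw [indicator_of_mem (mem_Ioi.mpr ht), abs_of_nonneg]
    · exact mul_dψ_le ht
    · exact mul_nonneg (by linarith) (dψ_nonneg ht.le)

theorem abs_mul_indicator_dψ_mul_log_le (t : ℝ) :
    |t * (Ioi 1).indicator dψ t * log t| ≤ 16 / 3 := by
  rcases le_or_gt t 1 with ht | ht
  · norm_num [indicator_of_notMem (notMem_Ioi.mpr ht)]
  · rw [indicator_of_mem (mem_Ioi.mpr ht), abs_of_nonneg]
    · exact mul_dψ_mul_log_le ht
    · exact mul_nonneg (mul_nonneg (by linarith) (dψ_nonneg ht.le)) (log_nonneg ht.le)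

theorem abs_sq_mul_indicator_d2ψ_mul_log_le (t : ℝ) :
    |t ^ 2 * (Ioi 1).indicator d2ψ t * log t| ≤ 352 / 3 := by
  rcases le_or_gt t 1 with ht | ht
  · norm_num [indicator_of_notMem (notMem_Ioi.mpr ht)]
  · rw [indicator_of_mem (mem_Ioi.mpr ht)]
    exact abs_sq_mul_d2ψ_mul_log_le ht

section Exponent

variable (a b ε : ℝ)

noncomputable def exponent (t : ℝ) : ℝ := a - b * cos (ε * (Ioi 1).indicator ψ t)

noncomputable def exponentDeriv (t : ℝ) : ℝ :=
  b * sin (ε * (Ioi 1).indicator ψ t) * (ε * (Ioi 1).indicator dψ t)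

noncomputable def exponentDeriv2 (t : ℝ) : ℝ :=
  b * (cos (ε * (Ioi 1).indicator ψ t) * (ε * (Ioi 1).indicator dψ t) ^ 2
    + sin (ε * (Ioi 1).indicator ψ t) * (ε * (Ioi 1).indicator d2ψ t))

theorem hasDerivAt_indicator_ψ (t : ℝ) :
    HasDerivAt ((Ioi 1).indicator ψ) ((Ioi 1).indicator dψ t) t :=
  hasDerivAt_indicator_Ioi (fun x _ => hasDerivAt_ψ x) ψ_one dψ_one t

theorem hasDerivAt_indicator_dψ (t : ℝ) :
    HasDerivAt ((Ioi 1).indicator dψ) ((Ioi 1).indicator d2ψ t) t :=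
  hasDerivAt_indicator_Ioi (fun x _ => hasDerivAt_dψ x) dψ_one d2ψ_one t

theorem hasDerivAt_exponent (t : ℝ) : HasDerivAt (exponent a b ε) (exponentDeriv b ε t) t := by
  refine ((((hasDerivAt_indicator_ψ t).const_mul ε).cos.const_mul b).const_sub a).congr_deriv ?_
  simp only [exponentDeriv]
  ring

theorem hasDerivAt_exponentDeriv (t : ℝ) :
    HasDerivAt (exponentDeriv b ε) (exponentDeriv2 b ε t) t := by
  have hθ := (hasDerivAt_indicator_ψ t).const_mul ε
  refine ((hθ.sin.const_mul b).mul ((hasDerivAt_indicator_dψ t).const_mul ε)).congr_deriv ?_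
  simp only [exponentDeriv2]
  ring

variable {a b ε}

theorem add_mul_sin_eq_exponent {φ : ℝ → ℝ} (hφ : ∀ t : ℝ, φ t = if t ≤ 1 then 3 * π / 2
      else 3 * π / 2 + ε * log (log (exp 1 + (t - 1) ^ 4))) (t : ℝ) :
    a + b * sin (φ t) = exponent a b ε t := by
  have hφt : φ t = 3 * π / 2 + ε * (Ioi 1).indicator ψ t := by
    rcases le_or_gt t 1 with h | h
    · rw [hφ t, if_pos h, indicator_of_notMem (notMem_Ioi.mpr h), mul_zero, add_zero]
    · rw [hφ t, if_neg h.not_ge, indicator_of_mem (mem_Ioi.mpr h)]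
      rfl
  rw [hφt, sin_three_pi_div_two_add, exponent, mul_neg, ← sub_eq_add_neg]

theorem abs_exponent_sub_le (hb : 0 ≤ b) (t : ℝ) : |exponent a b ε t - a| ≤ b := by
  rw [exponent, sub_sub_cancel_left, abs_neg, abs_mul, abs_of_nonneg hb]
  exact mul_le_of_le_one_right hb (abs_cos_le_one _)

theorem abs_mul_exponentDeriv_le (hb : 0 ≤ b) (hε : 0 ≤ ε) (t : ℝ) :
    |t * exponentDeriv b ε t| ≤ 8 * (b * ε) := by
  rw [show t * exponentDeriv b ε t = (b * ε) * (sin (ε * (Ioi 1).indicator ψ t)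
      * (t * (Ioi 1).indicator dψ t)) by rw [exponentDeriv]; ring,
    abs_mul, abs_of_nonneg (mul_nonneg hb hε), mul_comm 8]
  exact mul_le_mul_of_nonneg_left
    (abs_mul_le_of_abs_le_one (abs_sin_le_one _) (abs_mul_indicator_dψ_le t)) (mul_nonneg hb hε)

theorem abs_mul_exponentDeriv_mul_log_le (hb : 0 ≤ b) (hε : 0 ≤ ε) (t : ℝ) :
    |t * exponentDeriv b ε t * log t| ≤ 16 / 3 * (b * ε) := by
  rw [show t * exponentDeriv b ε t * log t = (b * ε) * (sin (ε * (Ioi 1).indicator ψ t)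
      * (t * (Ioi 1).indicator dψ t * log t)) by rw [exponentDeriv]; ring,
    abs_mul, abs_of_nonneg (mul_nonneg hb hε), mul_comm (16 / 3)]
  exact mul_le_mul_of_nonneg_left (abs_mul_le_of_abs_le_one (abs_sin_le_one _)
    (abs_mul_indicator_dψ_mul_log_le t)) (mul_nonneg hb hε)

theorem abs_sq_mul_exponentDeriv2_mul_log_le (hb : 0 ≤ b) (hε : 0 ≤ ε) (hε1 : ε ≤ 1) (t : ℝ) :
    |t ^ 2 * exponentDeriv2 b ε t * log t| ≤ 160 * (b * ε) := by
  set θ := ε * (Ioi 1).indicator ψ t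
  set p := t * (Ioi 1).indicator dψ t
  have hquad : |cos θ * ε * (p * (p * log t))| ≤ 128 / 3 := by
    refine abs_mul_le_of_abs_le_one ?_ ?_
    · rw [abs_mul, abs_of_nonneg hε]
      exact mul_le_one₀ (abs_cos_le_one θ) hε hε1
    · rw [abs_mul]
      nlinarith [mul_le_mul (abs_mul_indicator_dψ_le t) (abs_mul_indicator_dψ_mul_log_le t)
        (abs_nonneg _) (by norm_num : (0 : ℝ) ≤ 8)]
  have hlin := abs_mul_le_of_abs_le_one (abs_sin_le_one θ) (abs_sq_mul_indicator_d2ψ_mul_log_le t)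
  rw [show t ^ 2 * exponentDeriv2 b ε t * log t = (b * ε) * (cos θ * ε * (p * (p * log t))
      + sin θ * (t ^ 2 * (Ioi 1).indicator d2ψ t * log t)) by rw [exponentDeriv2]; ring,
    abs_mul, abs_of_nonneg (mul_nonneg hb hε), mul_comm 160]
  refine mul_le_mul_of_nonneg_left ((abs_add_le _ _).trans ?_) (mul_nonneg hb hε)
  linarith

theorem abs_rpowElasticity_exponent_sub_le (hb : 0 ≤ b) (hε : 0 ≤ ε) (t : ℝ) :
    |rpowElasticity (exponent a b ε) (exponentDeriv b ε) t - a| ≤ b + 16 / 3 * (b * ε) := by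
  rw [rpowElasticity, add_sub_assoc]
  exact (abs_add_le _ _).trans (add_comm b _ ▸ add_le_add
    (abs_mul_exponentDeriv_mul_log_le hb hε t) (abs_exponent_sub_le hb t))

theorem abs_mul_deriv_rpowElasticity_exponent_le (hb : 0 ≤ b) (hε : 0 ≤ ε) (hε1 : ε ≤ 1)
    (t : ℝ) :
    |t * (exponentDeriv b ε t * log t + t * exponentDeriv2 b ε t * log t
      + 2 * exponentDeriv b ε t)| ≤ 544 / 3 * (b * ε) := by
  rw [show t * (exponentDeriv b ε t * log t + t * exponentDeriv2 b ε t * log t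
      + 2 * exponentDeriv b ε t) = t * exponentDeriv b ε t * log t
        + t ^ 2 * exponentDeriv2 b ε t * log t + 2 * (t * exponentDeriv b ε t) by ring]
  refine (abs_add_le _ _).trans ?_
  rw [abs_mul, abs_two]
  linarith [(abs_add_le _ _).trans (add_le_add (abs_mul_exponentDeriv_mul_log_le hb hε t)
    (abs_sq_mul_exponentDeriv2_mul_log_le hb hε hε1 t)), abs_mul_exponentDeriv_le hb hε t]

end Exponent

end Phase

theorem g_second_deriv_estimate_general (a b ε : ℝ) (hb : 0 < b)
    (hε : 0 < ε) (hε' : ε < min 1 ((a - 1 - b) / (224 * b)))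
    (φ : ℝ → ℝ)
    (hφ : ∀ t : ℝ, φ t = if t ≤ 1 then 3 * π / 2
      else 3 * π / 2 + ε * Real.log (Real.log (Real.exp 1 + (t - 1) ^ 4)))
    (g : ℝ → ℝ)
    (hg : ∀ t : ℝ, 0 < t → g t = t ^ (a + b * Real.sin (φ t))) :
    (∀ t : ℝ, 0 < t →
      0 < (a - 1 - b - 224 * b * ε) * (deriv g t / t) ∧
      (a - 1 - b - 224 * b * ε) * (deriv g t / t) ≤ deriv (deriv g) t ∧
      deriv (deriv g) t ≤ (a - 1 + b + 224 * b * ε) * (deriv g t / t)) ∧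
    (∀ t : ℝ, 0 < t → 0 < deriv (deriv g) t) := by
  have hbε : 0 < b * ε := mul_pos hb hε
  have hε1 : ε ≤ 1 := hε'.le.trans (min_le_left _ _)
  have hsmall : 224 * (b * ε) < a - 1 - b := by
    have h := hε'.trans_le (min_le_right _ _)
    rw [lt_div_iff₀ (by positivity)] at h
    linarith
  have hgH : ∀ x > 0, g x = x ^ Phase.exponent a b ε x := fun x hx => by
    rw [hg x hx, Phase.add_mul_sin_eq_exponent hφ]
  have hmain : ∀ t > 0, 0 < deriv g t / t ∧
      (a - 1 - b - 224 * b * ε) * (deriv g t / t) ≤ deriv (deriv g) t ∧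
      deriv (deriv g) t ≤ (a - 1 + b + 224 * b * ε) * (deriv g t / t) := by
    intro t ht
    obtain ⟨hm, hM⟩ := abs_le.mp (Phase.abs_rpowElasticity_exponent_sub_le (a := a) hb.le hε.le t)
    obtain ⟨hpos, hlow, hup⟩ := deriv_deriv_bounds_of_elasticity
      (m := a - b - 16 / 3 * (b * ε)) (M := a + b + 16 / 3 * (b * ε))
      ((eventually_gt_nhds ht).mono fun x hx =>
        hasDerivAt_of_eqOn_rpow hgH (Phase.hasDerivAt_exponent a b ε x) hx)
      (hasDerivAt_rpowElasticity
        (Phase.hasDerivAt_exponent a b ε t) (Phase.hasDerivAt_exponentDeriv b ε t) ht.ne')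
      ht (by rw [hgH t ht]; positivity) (by linarith) (by linarith) (by linarith)
      (Phase.abs_mul_deriv_rpowElasticity_exponent_le hb.le hε.le hε1 t)
    exact ⟨hpos, (mul_le_mul_of_nonneg_right (by linarith) hpos.le).trans hlow,
      hup.trans (mul_le_mul_of_nonneg_right (by linarith) hpos.le)⟩
  have hcoef : 0 < a - 1 - b - 224 * b * ε := by linarith
  exact ⟨fun t ht => ⟨mul_pos hcoef (hmain t ht).1, (hmain t ht).2⟩,
    fun t ht => (mul_pos hcoef (hmain t ht).1).trans_le (hmain t ht).2.1⟩

theorem g_second_deriv_estimate (a b ε : ℝ) (ha : 0 < a) (hb : 0 < b)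
    (hab : 1 < a - b) (hε : 0 < ε) (hε' : ε < min 1 ((a - 1 - b) / (224 * b)))
    (φ : ℝ → ℝ)
    (hφ : ∀ t : ℝ, φ t = if t ≤ 1 then 3 * π / 2
      else 3 * π / 2 + ε * Real.log (Real.log (Real.exp 1 + (t - 1) ^ 4)))
    (g : ℝ → ℝ) (hg0 : g 0 = 0)
    (hg : ∀ t : ℝ, 0 < t → g t = t ^ (a + b * Real.sin (φ t))) :
    (∀ t : ℝ, 0 < t →
      0 < (a - 1 - b - 224 * b * ε) * (deriv g t / t) ∧
      (a - 1 - b - 224 * b * ε) * (deriv g t / t) ≤ deriv (deriv g) t ∧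
      deriv (deriv g) t ≤ (a - 1 + b + 224 * b * ε) * (deriv g t / t)) ∧
    (∀ t : ℝ, 0 < t → 0 < deriv (deriv g) t) :=
  g_second_deriv_estimate_general a b ε hb hε hε' φ hφ g hg
end
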